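/- arXiv:2411.18610 — 5 statements merged into one kernel-verified Lean document; each statement's English description precedes it below -/
import Mathlib

section
/- Let p ∈ ℝ² with p ≠ 0, and set p₀ = √(1+|p|²) and p̂ = p/p₀ (so 0 < |p̂| < 1). Then the integral over the closed unit disc satisfies ∫_{|ξ|≤1} (1 + p̂·ξ)^{-3/2} (1 - |ξ|²)^{-1/2} dξ = (2π/|p̂|) · ( 1/√(1-|p̂|) − 1/√(1+|p̂|) ), where the integral is taken with respect to two-dimensional Lebesgue measure in ξ ∈ ℝ². -/
/-!
A reflection sending `p̂` to `|p̂| e₀` reduces the integrand to `(1 + |p̂| ξ₀)^{-3/2} (1 - |ξ|²)^{-1/2}`.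
For fixed `ξ₀ = x ∈ (-1, 1)` the integral of `(1 - x² - y²)^{-1/2}` over `|y| ≤ √(1 - x²)` is `π`
(an arcsine), so by Fubini the weighted measure `(1 - |ξ|²)^{-1/2} dξ` on the disc projects to
`π dx` on `(-1, 1)`, and what is left is the elementary integral
`∫₋₁¹ (1 + a x)^{-3/2} dx = (2/a) ((1 - a)^{-1/2} - (1 + a)^{-1/2})`.
-/

open MeasureTheory RealInnerProductSpace Real Set Metric

section Rotation

variable {E : Type*} [NormedAddCommGroup E] [InnerProductSpace ℝ E] [FiniteDimensional ℝ E]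
  [MeasurableSpace E] [BorelSpace E]

theorem setIntegral_closedBall_inner_eq_of_norm_eq {u w : E} (h : ‖u‖ = ‖w‖)
    (F : ℝ → ℝ → ℝ) (r : ℝ) :
    ∫ ξ in closedBall 0 r, F ⟪u, ξ⟫ ‖ξ‖ = ∫ ξ in closedBall 0 r, F ⟪w, ξ⟫ ‖ξ‖ := by
  set T := Submodule.reflection (ℝ ∙ (w - u))ᗮ
  have hTw : T w = u := Submodule.reflection_sub h.symm
  have hball : T ⁻¹' closedBall 0 r = closedBall 0 r := by simp
  rw [← T.measurePreserving.setIntegral_preimage_emb T.toHomeomorph.measurableEmbedding, hball]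
  simp_rw [← hTw, LinearIsometryEquiv.inner_map_map, LinearIsometryEquiv.norm_map]

end Rotation

theorem rpow_neg_one_div_two_eq_one_div_sqrt {x : ℝ} (hx : 0 ≤ x) :
    x ^ (-(1 : ℝ) / 2) = 1 / √x := by
  rw [neg_div, rpow_neg hx, ← sqrt_eq_rpow, one_div]

theorem hasDerivAt_arcsin_div {c y : ℝ} (hc : 0 < c) (hy : y ∈ Ioo (-c) c) :
    HasDerivAt (fun y ↦ arcsin (y / c)) ((c ^ 2 - y ^ 2) ^ (-(1 : ℝ) / 2)) y := by
  have hlt : y / c < 1 := (div_lt_one hc).mpr hy.2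
  have hgt : -1 < y / c := by rw [lt_div_iff₀ hc]; linarith [hy.1]
  have hpos : 0 < c ^ 2 - y ^ 2 := by nlinarith [hy.1, hy.2]
  refine ((hasDerivAt_arcsin hgt.ne' hlt.ne).comp y ((hasDerivAt_id y).div_const c)).congr_deriv ?_
  rw [rpow_neg_one_div_two_eq_one_div_sqrt hpos.le,
    show 1 - (y / c) ^ 2 = (c ^ 2 - y ^ 2) / c ^ 2 by field_simp, sqrt_div hpos.le, sqrt_sq hc.le]
  field_simp

theorem setLIntegral_Icc_sq_sub_sq_rpow_neg_one_div_two {c : ℝ} (hc : 0 < c) :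
    ∫⁻ y in Icc (-c) c, ENNReal.ofReal ((c ^ 2 - y ^ 2) ^ (-(1 : ℝ) / 2)) = ENNReal.ofReal π := by
  have hcont : ContinuousOn (fun y ↦ arcsin (y / c)) (Icc (-c) c) := by fun_prop
  have hderiv (y) (hy : y ∈ Ioo (-c) c) := hasDerivAt_arcsin_div hc hy
  have hnonneg (y) (hy : y ∈ Ioc (-c) c) : 0 ≤ (c ^ 2 - y ^ 2) ^ (-(1 : ℝ) / 2) :=
    rpow_nonneg (by nlinarith [hy.1, hy.2]) _
  have hint := intervalIntegral.integrableOn_deriv_of_nonneg hcont hderiv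
    fun y hy ↦ hnonneg y (Ioo_subset_Ioc_self hy)
  rw [setLIntegral_congr Ioc_ae_eq_Icc.symm, ← ofReal_integral_eq_lintegral_ofReal hint
    (ae_restrict_of_forall_mem measurableSet_Ioc hnonneg),
    ← intervalIntegral.integral_of_le (by linarith),
    intervalIntegral.integral_eq_sub_of_hasDerivAt_of_le (by linarith) hcont hderiv
      ((intervalIntegrable_iff_integrableOn_Ioc_of_le (by linarith)).mpr hint),
    div_self hc.ne', neg_div, div_self hc.ne', arcsin_neg, arcsin_one]
  ring_nf

theorem setLIntegral_unitDisc_slice (x : ℝ) :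
    ∫⁻ y in {y | x ^ 2 + y ^ 2 ≤ 1}, ENNReal.ofReal ((1 - x ^ 2 - y ^ 2) ^ (-(1 : ℝ) / 2)) =
      (Ioo (-1) 1).indicator (fun _ ↦ ENNReal.ofReal π) x := by
  by_cases hx : x ∈ Ioo (-1) 1
  · have hpos : 0 < 1 - x ^ 2 := by nlinarith [hx.1, hx.2]
    have hc2 : √(1 - x ^ 2) ^ 2 = 1 - x ^ 2 := sq_sqrt hpos.le
    have hslice : {y | x ^ 2 + y ^ 2 ≤ 1} = Icc (-√(1 - x ^ 2)) √(1 - x ^ 2) := by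
      ext y
      rw [mem_ofPred_eq, mem_Icc, ← abs_le]
      constructor
      · exact fun hy ↦ abs_le_sqrt (by linarith)
      · intro hy
        nlinarith [sq_abs y, abs_nonneg y]
    rw [indicator_of_mem hx, hslice,
      ← setLIntegral_Icc_sq_sub_sq_rpow_neg_one_div_two (sqrt_pos.mpr hpos), hc2]
  · have hnull : volume {y : ℝ | x ^ 2 + y ^ 2 ≤ 1} = 0 := by
      refine measure_mono_null (fun y (hy : x ^ 2 + y ^ 2 ≤ 1) ↦ ?_) (measure_singleton 0)
      have : 1 ≤ x ^ 2 := by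
        by_contra! h
        exact hx ⟨by nlinarith, by nlinarith⟩
      exact pow_eq_zero_iff (n := 2) two_ne_zero |>.mp (by nlinarith [sq_nonneg y])
    rw [indicator_of_notMem hx, setLIntegral_measure_zero _ _ hnull]

theorem setLIntegral_unitDisc_fst_mul_rpow (g : ℝ → ENNReal) (hg : Measurable g) :
    ∫⁻ z in {z : ℝ × ℝ | z.1 ^ 2 + z.2 ^ 2 ≤ 1},
        g z.1 * ENNReal.ofReal ((1 - z.1 ^ 2 - z.2 ^ 2) ^ (-(1 : ℝ) / 2)) =
      ENNReal.ofReal π * ∫⁻ x in Ioo (-1) 1, g x := by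
  have hD : MeasurableSet {z : ℝ × ℝ | z.1 ^ 2 + z.2 ^ 2 ≤ 1} :=
    measurableSet_le (by fun_prop) (by fun_prop)
  rw [← lintegral_indicator hD, Measure.volume_eq_prod,
    lintegral_prod _ ((by fun_prop : Measurable _).indicator hD).aemeasurable,
    ← lintegral_indicator measurableSet_Ioo,
    ← lintegral_const_mul _ (hg.indicator measurableSet_Ioo)]
  congr 1 with x
  have hsplit (y : ℝ) : {z : ℝ × ℝ | z.1 ^ 2 + z.2 ^ 2 ≤ 1}.indicator
      (fun z ↦ g z.1 * ENNReal.ofReal ((1 - z.1 ^ 2 - z.2 ^ 2) ^ (-(1 : ℝ) / 2))) (x, y) =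
      g x * {y | x ^ 2 + y ^ 2 ≤ 1}.indicator
        (fun y ↦ ENNReal.ofReal ((1 - x ^ 2 - y ^ 2) ^ (-(1 : ℝ) / 2))) y := by
    by_cases h : x ^ 2 + y ^ 2 ≤ 1 <;> simp [h]
  have hslice : MeasurableSet {y : ℝ | x ^ 2 + y ^ 2 ≤ 1} :=
    measurableSet_le (by fun_prop) (by fun_prop)
  simp_rw [hsplit]
  rw [lintegral_const_mul _ ((by fun_prop : Measurable _).indicator hslice),
    lintegral_indicator hslice, setLIntegral_unitDisc_slice]
  by_cases hx : x ∈ Ioo (-1) 1 <;> simp [hx, mul_comm]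

theorem setLIntegral_closedBall_apply_zero_mul_rpow (g : ℝ → ENNReal) (hg : Measurable g) :
    ∫⁻ ξ in closedBall (0 : EuclideanSpace ℝ (Fin 2)) 1,
        g (ξ 0) * ENNReal.ofReal ((1 - ‖ξ‖ ^ 2) ^ (-(1 : ℝ) / 2)) =
      ENNReal.ofReal π * ∫⁻ x in Ioo (-1) 1, g x := by
  let e : EuclideanSpace ℝ (Fin 2) ≃ᵐ ℝ × ℝ :=
    (MeasurableEquiv.toLp 2 (Fin 2 → ℝ)).symm.trans (MeasurableEquiv.piFinTwo fun _ ↦ ℝ)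
  have he : MeasurePreserving e :=
    (volume_preserving_piFinTwo fun _ ↦ ℝ).comp
      (EuclideanSpace.volume_preserving_symm_measurableEquiv_toLp (Fin 2))
  have hnorm (ξ : EuclideanSpace ℝ (Fin 2)) : ‖ξ‖ ^ 2 = (e ξ).1 ^ 2 + (e ξ).2 ^ 2 := by
    simp [EuclideanSpace.real_norm_sq_eq, Fin.sum_univ_two, e]
  have hball : closedBall (0 : EuclideanSpace ℝ (Fin 2)) 1 =
      e ⁻¹' {z : ℝ × ℝ | z.1 ^ 2 + z.2 ^ 2 ≤ 1} := by
    ext ξ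
    rw [mem_closedBall_zero_iff, mem_preimage, mem_ofPred_eq, ← hnorm,
      sq_le_one_iff₀ (norm_nonneg ξ)]
  rw [← setLIntegral_unitDisc_fst_mul_rpow g hg,
    ← he.setLIntegral_comp_preimage_emb e.measurableEmbedding, ← hball]
  simp_rw [hnorm, ← sub_sub]
  rfl

-- Both sides go through `lintegral`, so no integrability assumption is needed: if the integral
-- diverges, both sides are `0`.
theorem setIntegral_closedBall_apply_zero_mul_rpow {g : ℝ → ℝ} (hg : Measurable g)
    (hg0 : ∀ x ∈ Icc (-1) 1, 0 ≤ g x) :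
    ∫ ξ in closedBall (0 : EuclideanSpace ℝ (Fin 2)) 1, g (ξ 0) * (1 - ‖ξ‖ ^ 2) ^ (-(1 : ℝ) / 2) =
      π * ∫ x in (-1)..1, g x := by
  have hball_nonneg : ∀ ξ ∈ closedBall (0 : EuclideanSpace ℝ (Fin 2)) 1,
      0 ≤ g (ξ 0) ∧ 0 ≤ (1 - ‖ξ‖ ^ 2) ^ (-(1 : ℝ) / 2) := by
    intro ξ hξ
    rw [mem_closedBall_zero_iff] at hξ
    have h0 : |ξ 0| ≤ 1 := (PiLp.norm_apply_le ξ 0).trans hξ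
    exact ⟨hg0 _ (abs_le.mp h0), rpow_nonneg (by nlinarith [norm_nonneg ξ]) _⟩
  rw [integral_eq_lintegral_of_nonneg_ae (ae_restrict_of_forall_mem measurableSet_closedBall
      fun ξ hξ ↦ mul_nonneg (hball_nonneg ξ hξ).1 (hball_nonneg ξ hξ).2) (by fun_prop),
    setLIntegral_congr_fun measurableSet_closedBall
      fun ξ hξ ↦ ENNReal.ofReal_mul (hball_nonneg ξ hξ).1,
    setLIntegral_closedBall_apply_zero_mul_rpow (fun x ↦ ENNReal.ofReal (g x)) (by fun_prop),
    ENNReal.toReal_mul, ENNReal.toReal_ofReal pi_pos.le,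
    intervalIntegral.integral_of_le (by norm_num), integral_Ioc_eq_integral_Ioo,
    integral_eq_lintegral_of_nonneg_ae
      (ae_restrict_of_forall_mem measurableSet_Ioo fun x hx ↦ hg0 x (Ioo_subset_Icc_self hx))
      hg.aestronglyMeasurable]

theorem one_add_mul_pos {a x : ℝ} (ha : |a| < 1) (hx : x ∈ Icc (-1) 1) : 0 < 1 + a * x := by
  have hax : |a * x| < 1 := by
    rw [abs_mul]
    exact (mul_le_of_le_one_right (abs_nonneg a) (abs_le.mpr hx)).trans_lt ha
  linarith [neg_abs_le (a * x)]

theorem integral_one_add_mul_rpow_neg_three_div_two {a : ℝ} (ha0 : a ≠ 0) (ha : |a| < 1) :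
    ∫ x in (-1)..1, (1 + a * x) ^ (-(3 : ℝ) / 2) = 2 / a * (1 / √(1 - a) - 1 / √(1 + a)) := by
  have hpos (x) (hx : x ∈ uIcc (-1 : ℝ) 1) : 0 < 1 + a * x :=
    one_add_mul_pos ha (by rwa [uIcc_of_le (by norm_num)] at hx)
  have hderiv (x) (hx : x ∈ uIcc (-1 : ℝ) 1) :
      HasDerivAt (fun x ↦ -2 / a * (1 + a * x) ^ (-(1 : ℝ) / 2))
        ((1 + a * x) ^ (-(3 : ℝ) / 2)) x := by
    have hlin : HasDerivAt (fun x ↦ 1 + a * x) a x := by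
      simpa using ((hasDerivAt_id x).const_mul a).const_add 1
    refine (((hasDerivAt_rpow_const (Or.inl (hpos x hx).ne')).comp x hlin).const_mul
      (-2 / a)).congr_deriv ?_
    rw [show -(1 : ℝ) / 2 - 1 = -(3 : ℝ) / 2 by norm_num]
    field_simp
  have hcont : ContinuousOn (fun x ↦ (1 + a * x) ^ (-(3 : ℝ) / 2)) (uIcc (-1) 1) :=
    fun x hx ↦ ((continuousAt_const.add (continuousAt_const.mul continuousAt_id)).rpow_const
      (Or.inl (hpos x hx).ne')).continuousWithinAt
  rw [intervalIntegral.integral_eq_sub_of_hasDerivAt hderiv hcont.intervalIntegrable,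
    mul_one, mul_neg_one, ← sub_eq_add_neg,
    rpow_neg_one_div_two_eq_one_div_sqrt (by linarith [abs_lt.mp ha]),
    rpow_neg_one_div_two_eq_one_div_sqrt (by linarith [abs_lt.mp ha])]
  ring

theorem norm_inv_sqrt_one_add_sq_smul_lt_one {E : Type*} [SeminormedAddCommGroup E]
    [NormedSpace ℝ E] (p : E) : ‖(√(1 + ‖p‖ ^ 2))⁻¹ • p‖ < 1 := by
  have hs : 0 < √(1 + ‖p‖ ^ 2) := sqrt_pos.mpr (by positivity)
  rw [norm_smul, norm_inv, norm_of_nonneg hs.le, inv_mul_lt_iff₀ hs, mul_one,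
    lt_sqrt (norm_nonneg p)]
  linarith

/-- For `p ∈ ℝ²`, `p ≠ 0`, with `p₀ = √(1+|p|²)` and `p̂ = p/p₀`, the integral over the
closed unit disc of `(1 + p̂·ξ)^{-3/2} (1 - |ξ|²)^{-1/2}` equals
`(2π/|p̂|) (1/√(1-|p̂|) - 1/√(1+|p̂|))`. -/
theorem stmt_0 (p : EuclideanSpace ℝ (Fin 2)) (hp : p ≠ 0) :
    (∫ ξ in Metric.closedBall (0 : EuclideanSpace ℝ (Fin 2)) 1,
        (1 + ⟪(Real.sqrt (1 + ‖p‖ ^ 2))⁻¹ • p, ξ⟫) ^ (-(3 : ℝ) / 2) *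
          (1 - ‖ξ‖ ^ 2) ^ (-(1 : ℝ) / 2)) =
      2 * Real.pi / ‖(Real.sqrt (1 + ‖p‖ ^ 2))⁻¹ • p‖ *
        (1 / Real.sqrt (1 - ‖(Real.sqrt (1 + ‖p‖ ^ 2))⁻¹ • p‖) -
          1 / Real.sqrt (1 + ‖(Real.sqrt (1 + ‖p‖ ^ 2))⁻¹ • p‖)) := by
  set q := (√(1 + ‖p‖ ^ 2))⁻¹ • p
  have hq0 : 0 < ‖q‖ :=
    norm_pos_iff.mpr (smul_ne_zero (inv_ne_zero (sqrt_pos.mpr (by positivity)).ne') hp)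
  have hq1 : |‖q‖| < 1 := by
    rw [abs_of_pos hq0]
    exact norm_inv_sqrt_one_add_sq_smul_lt_one p
  have hnorm : ‖q‖ = ‖‖q‖ • EuclideanSpace.single (0 : Fin 2) (1 : ℝ)‖ := by simp [norm_smul]
  rw [setIntegral_closedBall_inner_eq_of_norm_eq hnorm
    (fun t s ↦ (1 + t) ^ (-(3 : ℝ) / 2) * (1 - s ^ 2) ^ (-(1 : ℝ) / 2))]
  simp_rw [real_inner_smul_left, EuclideanSpace.inner_single_left, map_one, one_mul]
  rw [setIntegral_closedBall_apply_zero_mul_rpow (g := fun x ↦ (1 + ‖q‖ * x) ^ (-(3 : ℝ) / 2))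
    (by fun_prop) (fun x hx ↦ rpow_nonneg (one_add_mul_pos hq1 hx).le _),
    integral_one_add_mul_rpow_neg_three_div_two hq0.ne' hq1]
  ring
end

section
/- For every real B ≥ 0 and every φ ∈ ℝ, ∫₀^{B} ∫₀^{π} u / ( √(1+u²) ( 1 − (u/√(1+u²)) cos(φ − θ) ) ) dθ du ≤ π B². -/
/-!
For `|k| < 1` the function `θ ↦ 1 / (1 - k cos θ)` is positive and `2π`-periodic with
`∫₀^{2π} dθ / (1 - k cos θ) = 2π / √(1 - k²)`. Hence, for every `φ`, the integral over
`θ ∈ [0, π]` is at most `2π / √(1 - k²)`. With `k = u / √(1 + u²)` one has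
`√(1 - k²) = 1 / √(1 + u²)`, so the inner integral is at most `2π u`, and `∫₀^B 2π u du = π B²`.
-/

open MeasureTheory Real

lemma one_sub_mul_cos_pos {k : ℝ} (hk : |k| < 1) (x : ℝ) : 0 < 1 - k * cos x := by
  have : k * cos x < 1 :=
    calc k * cos x ≤ |k| * |cos x| := (le_abs_self _).trans (abs_mul _ _).le
      _ ≤ |k| * 1 := by gcongr; exact abs_cos_le_one x
      _ < 1 := by rwa [mul_one]
  linarith

lemma continuous_inv_one_sub_mul_cos {k : ℝ} (hk : |k| < 1) :
    Continuous fun θ => (1 - k * cos θ)⁻¹ :=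
  (continuous_const.sub (continuous_const.mul continuous_cos)).inv₀
    fun θ => (one_sub_mul_cos_pos hk θ).ne'

/-- An antiderivative of `(1 - k cos θ)⁻¹` for `|k| < 1`: it agrees on `(-π, π)` with the
half-angle substitution `(2 / √(1-k²)) arctan (√((1+k)/(1-k)) tan (θ/2))` but, unlike it,
is continuous on all of `ℝ`. -/
noncomputable def primitiveInvOneSubMulCos (k θ : ℝ) : ℝ :=
  (θ + 2 * arctan (k * sin θ / (1 + √(1 - k ^ 2) - k * cos θ))) / √(1 - k ^ 2)

lemma hasDerivAt_primitiveInvOneSubMulCos {k : ℝ} (hk : |k| < 1) (θ : ℝ) :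
    HasDerivAt (primitiveInvOneSubMulCos k) (1 - k * cos θ)⁻¹ θ := by
  set w := √(1 - k ^ 2)
  have hw : w ^ 2 = 1 - k ^ 2 := sq_sqrt (by nlinarith [abs_lt.mp hk])
  have hpos := one_sub_mul_cos_pos hk θ
  have hden : 0 < 1 + w - k * cos θ := by linarith [sqrt_nonneg (1 - k ^ 2)]
  have hquot : HasDerivAt (fun x => k * sin x / (1 + w - k * cos x))
      ((k * cos θ * (1 + w - k * cos θ) - k * sin θ * (k * sin θ)) /
        (1 + w - k * cos θ) ^ 2) θ := by
    refine ((hasDerivAt_sin θ).const_mul k).div ?_ hden.ne'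
    simpa using ((hasDerivAt_cos θ).const_mul k).const_sub (1 + w)
  refine (((hasDerivAt_id θ).add (((hasDerivAt_arctan _).comp θ hquot).const_mul 2)).div_const
    w).congr_deriv ?_
  have hsin : sin θ ^ 2 = 1 - cos θ ^ 2 := sin_sq θ
  have hw0 : w ≠ 0 := by nlinarith [abs_lt.mp hk]
  field_simp
  linear_combination (k ^ 3 * cos θ - w * k ^ 2 - k ^ 2) * hsin + (k * cos θ - 1 - w) * hw

theorem integral_inv_one_sub_mul_cos {k : ℝ} (hk : |k| < 1) :
    ∫ θ in (0 : ℝ)..2 * π, (1 - k * cos θ)⁻¹ = 2 * π / √(1 - k ^ 2) := by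
  rw [intervalIntegral.integral_eq_sub_of_hasDerivAt
    (fun θ _ => hasDerivAt_primitiveInvOneSubMulCos hk θ)
    ((continuous_inv_one_sub_mul_cos hk).intervalIntegrable _ _)]
  simp [primitiveInvOneSubMulCos]

theorem Function.Periodic.integral_comp_sub_le {h : ℝ → ℝ} {T : ℝ} (hper : Function.Periodic h T)
    (hcont : Continuous h) (hnonneg : 0 ≤ h) {a : ℝ} (ha : 0 ≤ a) (haT : a ≤ T) (φ : ℝ) :
    ∫ θ in (0 : ℝ)..a, h (φ - θ) ≤ ∫ θ in (0 : ℝ)..T, h θ := by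
  have hshift := hper.intervalIntegral_add_eq (φ - T) 0
  rw [sub_add_cancel, zero_add] at hshift
  rw [intervalIntegral.integral_comp_sub_left, sub_zero, ← hshift]
  exact intervalIntegral.integral_mono_interval (by linarith) (by linarith) le_rfl
    (Filter.Eventually.of_forall hnonneg) (hcont.intervalIntegrable _ _)

lemma abs_div_sqrt_one_add_sq_lt_one (u : ℝ) : |u / √(1 + u ^ 2)| < 1 := by
  have hS : 0 < √(1 + u ^ 2) := by positivity
  rw [abs_div, abs_of_pos hS, div_lt_one hS, ← sqrt_sq_eq_abs]
  exact sqrt_lt_sqrt (sq_nonneg u) (by linarith)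

lemma sqrt_one_sub_sq_div_sqrt_one_add_sq (u : ℝ) :
    √(1 - (u / √(1 + u ^ 2)) ^ 2) = (√(1 + u ^ 2))⁻¹ := by
  have hpos : 0 < 1 + u ^ 2 := by positivity
  rw [← sqrt_inv, div_pow, sq_sqrt hpos.le]
  congr 1
  field_simp
  ring

lemma integral_div_sqrt_one_add_sq_mul_one_sub_cos_le (φ : ℝ) {u : ℝ} (hu : 0 ≤ u) :
    ∫ θ in (0 : ℝ)..π, u / (√(1 + u ^ 2) * (1 - u / √(1 + u ^ 2) * cos (φ - θ))) ≤
      2 * π * u := by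
  set S := √(1 + u ^ 2)
  set k := u / S
  have hS : 0 < S := by positivity
  have hk : |k| < 1 := abs_div_sqrt_one_add_sq_lt_one u
  have hper : Function.Periodic (fun θ => (1 - k * cos θ)⁻¹) (2 * π) := fun θ => by
    simp only [cos_add_two_pi]
  have hcont := continuous_inv_one_sub_mul_cos hk
  calc ∫ θ in (0 : ℝ)..π, u / (S * (1 - k * cos (φ - θ)))
      = k * ∫ θ in (0 : ℝ)..π, (1 - k * cos (φ - θ))⁻¹ := by
        rw [← intervalIntegral.integral_const_mul]
        simp only [k, mul_inv, div_eq_mul_inv, mul_assoc]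
    _ ≤ k * ∫ θ in (0 : ℝ)..2 * π, (1 - k * cos θ)⁻¹ := by
        gcongr
        exact hper.integral_comp_sub_le hcont (fun θ => (inv_pos.2 (one_sub_mul_cos_pos hk θ)).le)
          pi_pos.le (by linarith [pi_pos]) φ
    _ = 2 * π * u := by
        rw [integral_inv_one_sub_mul_cos hk, sqrt_one_sub_sq_div_sqrt_one_add_sq, div_inv_eq_mul]
        linear_combination 2 * π * div_mul_cancel₀ u hS.ne'

/-- For `B ≥ 0` and `φ ∈ ℝ`:
`∫₀^B ∫₀^π u / (√(1+u²)(1 - (u/√(1+u²)) cos(φ-θ))) dθ du ≤ π B²`. -/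
theorem stmt_8 (B φ : ℝ) (hB : 0 ≤ B) :
    (∫ u in (0 : ℝ)..B, ∫ θ in (0 : ℝ)..Real.pi,
        u / (Real.sqrt (1 + u ^ 2) *
          (1 - u / Real.sqrt (1 + u ^ 2) * Real.cos (φ - θ)))) ≤
      Real.pi * B ^ 2 := by
  have hinner_nonneg (u : ℝ) (hu : 0 ≤ u) :
      0 ≤ ∫ θ in (0 : ℝ)..π, u / (√(1 + u ^ 2) * (1 - u / √(1 + u ^ 2) * cos (φ - θ))) :=
    intervalIntegral.integral_nonneg pi_pos.le fun θ _ => div_nonneg hu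
      (mul_pos (by positivity) (one_sub_mul_cos_pos (abs_div_sqrt_one_add_sq_lt_one u) _)).le
  rw [intervalIntegral.integral_of_le hB]
  calc _ ≤ ∫ u in Set.Ioc 0 B, 2 * π * u :=
        setIntegral_mono_of_nonneg (fun u hu => hinner_nonneg u hu.1.le)
          (fun u hu => integral_div_sqrt_one_add_sq_mul_one_sub_cos_le φ hu.1.le)
          (continuous_const.mul continuous_id).integrableOn_Ioc
    _ = π * B ^ 2 := by
        rw [← intervalIntegral.integral_of_le hB, intervalIntegral.integral_const_mul, integral_id]
        ring
end

section
/- For all reals β with 0 < β < π, all r > 0, ψ > 0, P₂ > 0, and all φ ∈ ℝ, ∫_{β/2}^{π−β/2} ∫₀^{P₂/ sin θ} u / ( √(1+u²) ( 1 − (u/√(1+u²)) (r/(r+2ψ)) cos(φ − θ) ) ) du dθ ≤ P₂ · ((r+2ψ)/ψ) · log( cot(β/4) ). -/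
/-!
Put `t = u / √(1 + u²) ∈ [0, 1)` and `k = r / (r + 2ψ)`. The integrand is
`t / (1 - t k cos (φ - θ)) ≤ 1 / (1 - k) = (r + 2ψ) / (2ψ)`, so the inner integral is at most
`(r + 2ψ) / (2ψ) · P₂ / sin θ`. As `log (tan (θ / 2))` is a primitive of `1 / sin θ`, the integral
of `1 / sin θ` over `[β/2, π - β/2]` is `2 log (cot (β / 4))`.
-/

open MeasureTheory Real Set

noncomputable def innerIntegrand (k c u : ℝ) : ℝ :=
  u / (√(1 + u ^ 2) * (1 - u / √(1 + u ^ 2) * k * c))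

lemma div_sqrt_one_add_sq_le_one (u : ℝ) : u / √(1 + u ^ 2) ≤ 1 :=
  div_le_one_of_le₀ ((le_abs_self u).trans (abs_le_sqrt (by linarith))) (sqrt_nonneg _)

lemma one_sub_le_one_sub_mul_mul {t k c : ℝ} (ht0 : 0 ≤ t) (ht1 : t ≤ 1) (hk0 : 0 ≤ k)
    (hc : c ≤ 1) : 1 - k ≤ 1 - t * k * c := by
  nlinarith [mul_le_mul_of_nonneg_left hc (mul_nonneg ht0 hk0), mul_le_of_le_one_left hk0 ht1]

lemma div_one_sub_mul_mul_le {t k c : ℝ} (ht0 : 0 ≤ t) (ht1 : t ≤ 1) (hk0 : 0 ≤ k)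
    (hk1 : k < 1) (hc : c ≤ 1) : t / (1 - t * k * c) ≤ 1 / (1 - k) :=
  div_le_div₀ zero_le_one ht1 (sub_pos.2 hk1) (one_sub_le_one_sub_mul_mul ht0 ht1 hk0 hc)

section innerIntegrand

variable {k c : ℝ} (hk0 : 0 ≤ k) (hk1 : k < 1) (hc : c ≤ 1)
include hk0 hk1 hc

lemma innerIntegrand_le {u : ℝ} (hu : 0 ≤ u) : innerIntegrand k c u ≤ 1 / (1 - k) := by
  rw [innerIntegrand, ← div_div]
  exact div_one_sub_mul_mul_le (by positivity) (div_sqrt_one_add_sq_le_one u) hk0 hk1 hc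

lemma continuousOn_innerIntegrand : ContinuousOn (innerIntegrand k c) (Ici 0) := by
  have hsqrt : ∀ u : ℝ, √(1 + u ^ 2) ≠ 0 := fun u => (sqrt_pos.2 (by positivity)).ne'
  refine continuousOn_id.div (by fun_prop (disch := exact hsqrt _)) fun u hu => ?_
  refine mul_ne_zero (hsqrt u) (lt_of_lt_of_le (sub_pos.2 hk1) ?_).ne'
  exact one_sub_le_one_sub_mul_mul (div_nonneg hu (sqrt_nonneg _))
    (div_sqrt_one_add_sq_le_one u) hk0 hc

lemma integral_innerIntegrand_le {b : ℝ} (hb : 0 ≤ b) :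
    ∫ u in (0 : ℝ)..b, innerIntegrand k c u ≤ b / (1 - k) := by
  have hint : IntervalIntegrable (innerIntegrand k c) volume 0 b :=
    ((continuousOn_innerIntegrand hk0 hk1 hc).mono
      (by simpa [uIcc_of_le hb] using Icc_subset_Ici_self)).intervalIntegrable
  calc ∫ u in (0 : ℝ)..b, innerIntegrand k c u
      ≤ ∫ _ in (0 : ℝ)..b, 1 / (1 - k) :=
        intervalIntegral.integral_mono_on hb hint intervalIntegrable_const
          fun u hu => innerIntegrand_le hk0 hk1 hc hu.1
    _ = b / (1 - k) := by simp [div_eq_mul_inv]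

end innerIntegrand

lemma hasDerivAt_log_tan_half {x : ℝ} (h0 : 0 < x) (hπ : x < π) :
    HasDerivAt (fun x => log (tan (x / 2))) (sin x)⁻¹ x := by
  have hcos : 0 < cos (x / 2) := cos_pos_of_mem_Ioo ⟨by linarith [pi_pos], by linarith⟩
  have htan := (hasDerivAt_tan hcos.ne').comp x ((hasDerivAt_id' x).div_const 2)
  have htan_pos : 0 < tan (x / 2) := tan_pos_of_pos_of_lt_pi_div_two (by linarith) (by linarith)
  refine (htan.log htan_pos.ne').congr_deriv ?_
  rw [Function.comp_apply, tan_eq_sin_div_cos, show x = 2 * (x / 2) by ring, sin_two_mul]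
  field_simp

section inv_sin

variable {a b : ℝ} (ha : 0 < a) (hab : a ≤ b) (hb : b < π)
include ha hab hb

lemma uIcc_subset_Ioo_zero_pi : uIcc a b ⊆ Ioo 0 π := by
  rw [uIcc_of_le hab]
  exact Icc_subset_Ioo ha hb

lemma intervalIntegrable_inv_sin : IntervalIntegrable (fun x => (sin x)⁻¹) volume a b := by
  have hsub := uIcc_subset_Ioo_zero_pi ha hab hb
  exact (continuousOn_sin.inv₀ fun x hx =>
    (sin_pos_of_pos_of_lt_pi (hsub hx).1 (hsub hx).2).ne').intervalIntegrable

lemma integral_inv_sin :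
    ∫ x in a..b, (sin x)⁻¹ = log (tan (b / 2)) - log (tan (a / 2)) := by
  have hsub := uIcc_subset_Ioo_zero_pi ha hab hb
  exact intervalIntegral.integral_eq_sub_of_hasDerivAt
    (fun x hx => hasDerivAt_log_tan_half (hsub hx).1 (hsub hx).2)
    (intervalIntegrable_inv_sin ha hab hb)

end inv_sin

lemma integral_inv_sin_symm {β : ℝ} (h0 : 0 < β) (hπ : β < π) :
    ∫ x in (β / 2)..(π - β / 2), (sin x)⁻¹ = 2 * log (cot (β / 4)) := by
  rw [integral_inv_sin (by linarith) (by linarith) (by linarith),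
    show (π - β / 2) / 2 = π / 2 - β / 4 by ring, show β / 2 / 2 = β / 4 by ring,
    tan_pi_div_two_sub, ← inv_inv (tan (β / 4)), tan_eq_sin_div_cos, inv_div,
    ← cot_eq_cos_div_sin, log_inv, log_inv]
  ring

lemma intervalIntegral.integral_le_of_le_of_integral_nonneg {f g : ℝ → ℝ} {a b : ℝ}
    (hab : a ≤ b) (hg : IntervalIntegrable g volume a b) (hg0 : 0 ≤ ∫ x in a..b, g x)
    (h : ∀ x ∈ Icc a b, f x ≤ g x) : ∫ x in a..b, f x ≤ ∫ x in a..b, g x := by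
  -- a non-integrable `f` has integral `0`
  by_cases hf : IntervalIntegrable f volume a b
  · exact intervalIntegral.integral_mono_on hab hf hg h
  · rwa [intervalIntegral.integral_undef hf]

/-- For `0 < β < π`, `r > 0`, `ψ > 0`, `P₂ > 0` and `φ ∈ ℝ`:
`∫_{β/2}^{π-β/2} ∫₀^{P₂/sin θ} u / (√(1+u²)(1 - (u/√(1+u²))(r/(r+2ψ)) cos(φ-θ))) du dθ
  ≤ P₂ ((r+2ψ)/ψ) log(cot(β/4))`. -/
theorem stmt_10 (β r ψ P₂ φ : ℝ) (hβ0 : 0 < β) (hβπ : β < Real.pi)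
    (hr : 0 < r) (hψ : 0 < ψ) (hP₂ : 0 < P₂) :
    (∫ θ in (β / 2)..(Real.pi - β / 2), ∫ u in (0 : ℝ)..(P₂ / Real.sin θ),
        u / (Real.sqrt (1 + u ^ 2) *
          (1 - u / Real.sqrt (1 + u ^ 2) * (r / (r + 2 * ψ)) * Real.cos (φ - θ)))) ≤
      P₂ * ((r + 2 * ψ) / ψ) * Real.log (Real.cot (β / 4)) := by
  set k := r / (r + 2 * ψ)
  have hk0 : 0 ≤ k := by positivity
  have hk1 : k < 1 := (div_lt_one (by positivity)).2 (by linarith)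
  have hsin : ∀ θ ∈ Icc (β / 2) (π - β / 2), 0 < sin θ := fun θ hθ =>
    sin_pos_of_pos_of_lt_pi (by linarith [hθ.1]) (by linarith [hθ.2])
  calc (∫ θ in (β / 2)..(π - β / 2),
        ∫ u in (0 : ℝ)..(P₂ / sin θ), innerIntegrand k (cos (φ - θ)) u)
      ≤ ∫ θ in (β / 2)..(π - β / 2), P₂ / (1 - k) * (sin θ)⁻¹ := by
        refine intervalIntegral.integral_le_of_le_of_integral_nonneg (by linarith) ?_ ?_
          fun θ hθ => ?_
        · exact (intervalIntegrable_inv_sin (by linarith) (by linarith) (by linarith)).const_mul _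
        · exact intervalIntegral.integral_nonneg (by linarith) fun θ hθ =>
            mul_nonneg (div_nonneg hP₂.le (sub_pos.2 hk1).le) (inv_nonneg.2 (hsin θ hθ).le)
        · exact (integral_innerIntegrand_le hk0 hk1 (cos_le_one _)
            (div_nonneg hP₂.le (hsin θ hθ).le)).trans_eq (by ring)
    _ = P₂ * ((r + 2 * ψ) / ψ) * log (cot (β / 4)) := by
        have h1k : 1 - k = 2 * ψ / (r + 2 * ψ) := by
          simp only [k]; field_simp; ring
        rw [intervalIntegral.integral_const_mul, integral_inv_sin_symm hβ0 hβπ, h1k]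
        field_simp
end

section
/- There is an absolute constant C > 0 with the following property. For all reals r > 0, ψ > 0 and all α, γ with 0 < 2γ ≤ α ≤ π/2, ∫_{{φ ∈ ℝ : α ≤ |φ| ≤ π/2}} sup_{λ ∈ [φ−γ, φ+γ]} ( 1 + ((r+ψ)/ψ) tan²(λ/2) )^{-1} dφ ≤ C · ( √(ψ(r+ψ)) + ψ ) / r. -/
open MeasureTheory

/-- There is an absolute constant `C > 0` such that for all `r, ψ > 0` and
`0 < 2γ ≤ α ≤ π/2`:
`∫_{α ≤ |φ| ≤ π/2} sup_{λ ∈ [φ-γ,φ+γ]} (1 + ((r+ψ)/ψ) tan²(λ/2))⁻¹ dφ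
  ≤ C (√(ψ(r+ψ)) + ψ)/r`. -/
theorem stmt_17 :
    ∃ C > (0 : ℝ), ∀ r ψ α γ : ℝ, 0 < r → 0 < ψ → 0 < γ → 2 * γ ≤ α → α ≤ Real.pi / 2 →
      (∫ φ in {φ : ℝ | α ≤ |φ| ∧ |φ| ≤ Real.pi / 2},
          ⨆ l ∈ Set.Icc (φ - γ) (φ + γ), (1 + (r + ψ) / ψ * Real.tan (l / 2) ^ 2)⁻¹) ≤
        C * (Real.sqrt (ψ * (r + ψ)) + ψ) / r := by
  have hπ := Real.pi_pos
  refine ⟨4 * Real.pi, by positivity, ?_⟩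
  intro r ψ α γ hr hψ hγ hγα hα
  have hrψ : (0 : ℝ) < r + ψ := by linarith
  set K : ℝ := (r + ψ) / ψ with hKdef
  have hK0 : (0 : ℝ) < K := by positivity
  set a : ℝ := Real.sqrt K / 4 with hadef
  have hsK : (0 : ℝ) < Real.sqrt K := Real.sqrt_pos.2 hK0
  have ha0 : (0 : ℝ) < a := by positivity
  set h : ℝ → ℝ := fun φ => (1 + (a * φ) ^ 2)⁻¹ with hhdef
  have hint : Integrable h := integrable_inv_one_add_sq.comp_mul_left' ha0.ne'
  set S : Set ℝ := {φ : ℝ | α ≤ |φ| ∧ |φ| ≤ Real.pi / 2} with hSdef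
  have hSm : MeasurableSet S := by
    have : S = {φ : ℝ | α ≤ |φ|} ∩ {φ : ℝ | |φ| ≤ Real.pi / 2} := by
      ext x; simp [hSdef, Set.mem_setOf_eq]
    rw [this]
    exact ((isClosed_le continuous_const continuous_abs).measurableSet).inter
      ((isClosed_le continuous_abs continuous_const).measurableSet)
  -- pointwise bound
  have hbound : ∀ φ ∈ S,
      (⨆ l ∈ Set.Icc (φ - γ) (φ + γ), (1 + K * Real.tan (l / 2) ^ 2)⁻¹) ≤ h φ := by
    intro φ hφ
    obtain ⟨hφ1, hφ2⟩ := hφ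
    have hh0 : (0 : ℝ) ≤ h φ := by
      have : (0:ℝ) < 1 + (a * φ) ^ 2 := by positivity
      exact (inv_nonneg).2 this.le
    refine Real.iSup_le (fun l => Real.iSup_le (fun hl => ?_) hh0) hh0
    obtain ⟨hl1, hl2⟩ := hl
    have hγα' : γ ≤ |φ| / 2 := by
      have : α ≤ |φ| := hφ1
      linarith
    have hlφ : |l - φ| ≤ γ := abs_le.2 ⟨by linarith, by linarith⟩
    have habs1 : |φ| - γ ≤ |l| := by
      have := abs_sub_abs_le_abs_sub φ l
      have h2 : |φ - l| = |l - φ| := abs_sub_comm φ l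
      linarith [h2 ▸ this]
    have habs2 : |l| ≤ |φ| + γ := by
      have := abs_sub_abs_le_abs_sub l φ
      linarith
    have hl_lo : |φ| / 2 ≤ |l| := by linarith
    have hl_hi : |l| < Real.pi := by
      have : γ ≤ Real.pi / 4 := by linarith
      linarith
    have hφpos : 0 < |φ| := by
      have : 0 < α := by linarith
      linarith
    have hlpos : 0 < |l| / 2 := by linarith
    have htan : |l| / 2 < Real.tan (|l| / 2) := Real.lt_tan hlpos (by linarith)
    have htansq : (φ / 4) ^ 2 ≤ Real.tan (l / 2) ^ 2 := by
      have heq : Real.tan (l / 2) ^ 2 = Real.tan (|l| / 2) ^ 2 := by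
        rcases abs_cases l with ⟨h1, _⟩ | ⟨h1, _⟩
        · rw [h1]
        · rw [h1, neg_div, Real.tan_neg, neg_sq]
      have h1 : |φ| / 4 ≤ Real.tan (|l| / 2) := by linarith
      have h2 : (|φ| / 4) ^ 2 ≤ Real.tan (|l| / 2) ^ 2 :=
        pow_le_pow_left₀ (by positivity) h1 2
      have h3 : (φ / 4) ^ 2 = (|φ| / 4) ^ 2 := by
        rw [div_pow, div_pow, sq_abs]
      rw [heq, h3]; exact h2
    have hden : 1 + (a * φ) ^ 2 ≤ 1 + K * Real.tan (l / 2) ^ 2 := by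
      have haφ : (a * φ) ^ 2 = K * (φ / 4) ^ 2 := by
        rw [hadef, mul_pow, div_pow, Real.sq_sqrt hK0.le, div_pow]
        ring
      rw [haφ]
      have := mul_le_mul_of_nonneg_left htansq hK0.le
      linarith
    have hpos : (0 : ℝ) < 1 + (a * φ) ^ 2 := by positivity
    exact inv_anti₀ hpos hden
  -- the integral of h over ℝ
  have hval : (∫ x : ℝ, h x) = a⁻¹ * Real.pi := by
    have := MeasureTheory.Measure.integral_comp_mul_left (fun x : ℝ => (1 + x ^ 2)⁻¹) a
    rw [integral_univ_inv_one_add_sq] at this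
    simpa [hhdef, smul_eq_mul, abs_of_pos (inv_pos.2 ha0)] using this
  have step1 : (∫ φ in S,
      ⨆ l ∈ Set.Icc (φ - γ) (φ + γ), (1 + K * Real.tan (l / 2) ^ 2)⁻¹) ≤ ∫ φ in S, h φ := by
    by_cases hF : IntegrableOn
        (fun φ => ⨆ l ∈ Set.Icc (φ - γ) (φ + γ), (1 + K * Real.tan (l / 2) ^ 2)⁻¹) S volume
    · exact setIntegral_mono_on hF hint.integrableOn hSm hbound
    · rw [integral_undef hF]
      exact setIntegral_nonneg hSm fun x _ => by positivity
  have step2 : (∫ φ in S, h φ) ≤ ∫ φ : ℝ, h φ :=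
    setIntegral_le_integral hint (Filter.Eventually.of_forall fun x => by positivity)
  have key : Real.sqrt K * Real.sqrt (ψ * (r + ψ)) = r + ψ := by
    rw [← Real.sqrt_mul hK0.le]
    rw [show K * (ψ * (r + ψ)) = (r + ψ) ^ 2 by
      rw [hKdef]; field_simp]
    exact Real.sqrt_sq hrψ.le
  have hs0 : (0 : ℝ) < Real.sqrt (ψ * (r + ψ)) := Real.sqrt_pos.2 (by positivity)
  have step3 : a⁻¹ * Real.pi ≤ 4 * Real.pi * (Real.sqrt (ψ * (r + ψ)) + ψ) / r := by
    have hainv : a⁻¹ = 4 * Real.sqrt (ψ * (r + ψ)) / (r + ψ) := by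
      have h4 : a⁻¹ = 4 / Real.sqrt K := by rw [hadef]; field_simp
      rw [h4, div_eq_div_iff hsK.ne' hrψ.ne']; linear_combination (-4 : ℝ) * key
    rw [hainv]
    rw [div_mul_eq_mul_div, div_le_div_iff₀ hrψ hr]
    have h1 : Real.sqrt (ψ * (r + ψ)) ≤ Real.sqrt (ψ * (r + ψ)) + ψ := by linarith
    nlinarith [mul_pos hs0 hπ, mul_pos hr hπ, mul_pos hs0 hψ, mul_pos hπ hψ]
  calc (∫ φ in S, ⨆ l ∈ Set.Icc (φ - γ) (φ + γ), (1 + K * Real.tan (l / 2) ^ 2)⁻¹)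
      ≤ ∫ φ in S, h φ := step1
    _ ≤ ∫ φ : ℝ, h φ := step2
    _ = a⁻¹ * Real.pi := hval
    _ ≤ 4 * Real.pi * (Real.sqrt (ψ * (r + ψ)) + ψ) / r := step3
end

section
/- Let C ≥ 1 and P₀ ≥ 0 be real constants, and let P, P₂ : [2,∞) → ℝ be functions with P(t) ≥ 2 and P₂(t) ≥ 1 for all t ≥ 2, satisfying for all t ≥ 2 the inequality P(t) ≤ P₂(t)³ + P₀ + C t³ P₂(t)² (log P(t))² + C t² P₂(t)^{3/4} P(t)^{3/4} (log P(t))^{3/4}. Then there exists a constant c > 0 depending only on C and P₀ such that for all t ≥ 2, P(t) ≤ c · t⁸ · P₂(t)³ · ( log( t P₂(t) ) )³. -/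
set_option maxHeartbeats 1000000 in
/-- Closing argument: if for all `t ≥ 2` one has `P t ≥ 2`, `P₂ t ≥ 1` and
`P t ≤ (P₂ t)³ + P₀ + C t³ (P₂ t)² (log (P t))² + C t² (P₂ t)^{3/4} (P t)^{3/4} (log (P t))^{3/4}`,
then there is `c > 0` depending only on `C` and `P₀` such that
`P t ≤ c t⁸ (P₂ t)³ (log (t · P₂ t))³` for all `t ≥ 2`. -/
theorem stmt_18 (C P₀ : ℝ) (hC : 1 ≤ C) (hP₀ : 0 ≤ P₀) :
    ∃ c > (0 : ℝ), ∀ P P₂ : ℝ → ℝ,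
      (∀ t : ℝ, 2 ≤ t → 2 ≤ P t) →
      (∀ t : ℝ, 2 ≤ t → 1 ≤ P₂ t) →
      (∀ t : ℝ, 2 ≤ t →
        P t ≤ (P₂ t) ^ 3 + P₀ + C * t ^ 3 * (P₂ t) ^ 2 * Real.log (P t) ^ 2 +
          C * t ^ 2 * (P₂ t) ^ ((3 : ℝ) / 4) * (P t) ^ ((3 : ℝ) / 4) *
            Real.log (P t) ^ ((3 : ℝ) / 4)) →
      ∀ t : ℝ, 2 ≤ t → P t ≤ c * t ^ 8 * (P₂ t) ^ 3 * Real.log (t * P₂ t) ^ 3 := by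
  have hC0 : (0 : ℝ) ≤ C := zero_le_one.trans hC
  have hC4 : (0 : ℝ) ≤ C ^ 4 := by positivity
  refine ⟨(32 + 32 * P₀ + 8 * C + C ^ 4) *
      (4 * Real.log (216 * (32 + 32 * P₀ + 8 * C + C ^ 4)) + 16) ^ 3, ?_, ?_⟩
  · have h1 : (32 : ℝ) ≤ 32 + 32 * P₀ + 8 * C + C ^ 4 := by nlinarith
    have h2 : (0 : ℝ) ≤ Real.log (216 * (32 + 32 * P₀ + 8 * C + C ^ 4)) :=
      Real.log_nonneg (by nlinarith)
    have := mul_pos (show (0:ℝ) < 32 + 32 * P₀ + 8 * C + C ^ 4 by linarith)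
      (pow_pos (show (0:ℝ) < 4 * Real.log (216 * (32 + 32 * P₀ + 8 * C + C ^ 4)) + 16 by linarith) 3)
    exact this
  intro P P₂ hP hP₂ hineq t ht
  set c₁ : ℝ := 32 + 32 * P₀ + 8 * C + C ^ 4 with hc₁def
  have hc₁32 : (32 : ℝ) ≤ c₁ := by rw [hc₁def]; nlinarith
  have hc₁pos : (0 : ℝ) < c₁ := by linarith
  have hlogc : (0 : ℝ) ≤ Real.log (216 * c₁) := Real.log_nonneg (by nlinarith)
  set K : ℝ := 4 * Real.log (216 * c₁) + 16 with hKdef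
  have hK16 : (16 : ℝ) ≤ K := by rw [hKdef]; linarith
  have hKpos : (0 : ℝ) < K := by linarith
  have ht1 : (1 : ℝ) ≤ t := by linarith
  have ht0 : (0 : ℝ) < t := by linarith
  have hPt : 2 ≤ P t := hP t ht
  have hPt0 : (0 : ℝ) < P t := by linarith
  have hP₂t : 1 ≤ P₂ t := hP₂ t ht
  have hP₂t0 : (0 : ℝ) < P₂ t := by linarith
  have hspec := hineq t ht
  set L : ℝ := Real.log (P t) with hLdef
  have hlog2 : (0.6931471803 : ℝ) < Real.log 2 := Real.log_two_gt_d9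
  have hL : (1 / 2 : ℝ) ≤ L := by
    have h := Real.log_le_log (by norm_num : (0:ℝ) < 2) hPt
    rw [← hLdef] at h
    linarith
  have hL0 : (0 : ℝ) ≤ L := by linarith
  -- (x^(3/4))^4 = x^3
  have h34 : ∀ x : ℝ, 0 ≤ x → (x ^ ((3 : ℝ) / 4)) ^ (4 : ℕ) = x ^ (3 : ℕ) := by
    intro x hx
    rw [← Real.rpow_natCast (x ^ ((3 : ℝ) / 4)) 4, ← Real.rpow_mul hx,
      show (3 : ℝ) / 4 * ((4 : ℕ) : ℝ) = ((3 : ℕ) : ℝ) by norm_num, Real.rpow_natCast]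
  set y : ℝ := C * t ^ 2 * (P₂ t) ^ ((3 : ℝ) / 4) * L ^ ((3 : ℝ) / 4) with hydef
  have hy0 : 0 ≤ y := by
    rw [hydef]
    have := Real.rpow_nonneg hP₂t0.le ((3 : ℝ) / 4)
    have := Real.rpow_nonneg hL0 ((3 : ℝ) / 4)
    positivity
  have hy4 : y ^ (4 : ℕ) = C ^ 4 * t ^ 8 * (P₂ t) ^ 3 * L ^ 3 := by
    have h1 := h34 (P₂ t) hP₂t0.le
    have h2 := h34 L hL0
    calc y ^ (4 : ℕ)
        = C ^ 4 * (t ^ 2) ^ 4 * ((P₂ t) ^ ((3 : ℝ) / 4)) ^ (4 : ℕ) *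
          (L ^ ((3 : ℝ) / 4)) ^ (4 : ℕ) := by rw [hydef]; ring
      _ = C ^ 4 * t ^ 8 * (P₂ t) ^ 3 * L ^ 3 := by rw [h1, h2]; ring
  have hYoung : C * t ^ 2 * (P₂ t) ^ ((3 : ℝ) / 4) * (P t) ^ ((3 : ℝ) / 4) * L ^ ((3 : ℝ) / 4) ≤
      3 / 4 * P t + 1 / 4 * (C ^ 4 * t ^ 8 * (P₂ t) ^ 3 * L ^ 3) := by
    have hg := Real.geom_mean_le_arith_mean2_weighted
      (by norm_num : (0:ℝ) ≤ 3 / 4) (by norm_num : (0:ℝ) ≤ 1 / 4) hPt0.le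
      (pow_nonneg hy0 4) (by norm_num : (3:ℝ)/4 + 1/4 = 1)
    have hinv : ((y ^ (4 : ℕ)) : ℝ) ^ ((1 : ℝ) / 4) = y := by
      rw [show (1 : ℝ) / 4 = (((4 : ℕ) : ℝ))⁻¹ by norm_num]
      exact Real.pow_rpow_inv_natCast hy0 (by norm_num)
    rw [hinv, hy4] at hg
    calc C * t ^ 2 * (P₂ t) ^ ((3 : ℝ) / 4) * (P t) ^ ((3 : ℝ) / 4) * L ^ ((3 : ℝ) / 4)
        = (P t) ^ ((3 : ℝ) / 4) * y := by rw [hydef]; ring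
      _ ≤ _ := hg
  have hstep : P t ≤ 4 * (P₂ t) ^ 3 + 4 * P₀ + 4 * (C * t ^ 3 * (P₂ t) ^ 2 * L ^ 2) +
      C ^ 4 * t ^ 8 * (P₂ t) ^ 3 * L ^ 3 := by linarith
  -- elementary power comparisons
  have ht8 : (1 : ℝ) ≤ t ^ 8 := by
    calc (1:ℝ) = 1 ^ 8 := by norm_num
      _ ≤ t ^ 8 := pow_le_pow_left₀ (by norm_num) ht1 8
  have hP₂3 : (1 : ℝ) ≤ (P₂ t) ^ 3 := by
    calc (1:ℝ) = 1 ^ 3 := by norm_num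
      _ ≤ (P₂ t) ^ 3 := pow_le_pow_left₀ (by norm_num) hP₂t 3
  have ht38 : t ^ 3 ≤ t ^ 8 := pow_le_pow_right₀ ht1 (by norm_num)
  have hP₂23 : (P₂ t) ^ 2 ≤ (P₂ t) ^ 3 := pow_le_pow_right₀ hP₂t (by norm_num)
  have hL23 : L ^ 2 ≤ 2 * L ^ 3 := by nlinarith
  have hL3 : (1 : ℝ) / 8 ≤ L ^ 3 := by nlinarith
  have hXpos : (0 : ℝ) < t ^ 8 * (P₂ t) ^ 3 := mul_pos (pow_pos ht0 8) (pow_pos hP₂t0 3)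
  have hb1 : (P₂ t) ^ 3 ≤ 8 * (t ^ 8 * (P₂ t) ^ 3 * L ^ 3) := by
    have h1 : (P₂ t) ^ 3 ≤ t ^ 8 * (P₂ t) ^ 3 :=
      le_mul_of_one_le_left (pow_nonneg hP₂t0.le 3) ht8
    have h2 : t ^ 8 * (P₂ t) ^ 3 * (1 / 8) ≤ t ^ 8 * (P₂ t) ^ 3 * L ^ 3 :=
      mul_le_mul_of_nonneg_left hL3 hXpos.le
    linarith
  have hX1 : (1 : ℝ) ≤ t ^ 8 * (P₂ t) ^ 3 := by
    have := mul_le_mul ht8 hP₂3 zero_le_one (by linarith : (0:ℝ) ≤ t ^ 8)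
    linarith
  have hY8 : (1 : ℝ) / 8 ≤ t ^ 8 * (P₂ t) ^ 3 * L ^ 3 := by
    have := mul_le_mul hX1 hL3 (by norm_num) (by linarith : (0:ℝ) ≤ t ^ 8 * (P₂ t) ^ 3)
    linarith
  have hb2 : 4 * P₀ ≤ 32 * P₀ * (t ^ 8 * (P₂ t) ^ 3 * L ^ 3) := by
    have := mul_le_mul_of_nonneg_left hY8 hP₀
    linarith
  have hb3 : 4 * (C * t ^ 3 * (P₂ t) ^ 2 * L ^ 2) ≤
      8 * C * (t ^ 8 * (P₂ t) ^ 3 * L ^ 3) := by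
    have m1 : t ^ 3 * (P₂ t) ^ 2 ≤ t ^ 8 * (P₂ t) ^ 3 :=
      mul_le_mul ht38 hP₂23 (pow_nonneg hP₂t0.le 2) (pow_nonneg ht0.le 8)
    have m2 : t ^ 3 * (P₂ t) ^ 2 * L ^ 2 ≤ t ^ 8 * (P₂ t) ^ 3 * (2 * L ^ 3) :=
      mul_le_mul m1 hL23 (pow_nonneg hL0 2) hXpos.le
    have m3 := mul_le_mul_of_nonneg_left m2 (show (0:ℝ) ≤ 4 * C by linarith)
    calc 4 * (C * t ^ 3 * (P₂ t) ^ 2 * L ^ 2)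
        = 4 * C * (t ^ 3 * (P₂ t) ^ 2 * L ^ 2) := by ring
      _ ≤ 4 * C * (t ^ 8 * (P₂ t) ^ 3 * (2 * L ^ 3)) := m3
      _ = 8 * C * (t ^ 8 * (P₂ t) ^ 3 * L ^ 3) := by ring
  have hmain : P t ≤ c₁ * (t ^ 8 * (P₂ t) ^ 3 * L ^ 3) := by
    rw [hc₁def]
    linarith [hstep, hb1, hb2, hb3]
  -- L^3 ≤ 216 * √P
  have hlog6 : L ≤ 6 * (P t) ^ ((1 : ℝ) / 6) := by
    have h := Real.log_le_sub_one_of_pos (Real.rpow_pos_of_pos hPt0 ((1 : ℝ) / 6))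
    have h2 : Real.log ((P t) ^ ((1 : ℝ) / 6)) = 1 / 6 * L := Real.log_rpow hPt0 _
    linarith [h2 ▸ h]
  have hpow16 : ((P t) ^ ((1 : ℝ) / 6)) ^ (3 : ℕ) = (P t) ^ ((1 : ℝ) / 2) := by
    rw [← Real.rpow_natCast ((P t) ^ ((1 : ℝ) / 6)) 3, ← Real.rpow_mul hPt0.le]
    norm_num
  have hcube : L ^ 3 ≤ 216 * (P t) ^ ((1 : ℝ) / 2) := by
    calc L ^ 3 ≤ (6 * (P t) ^ ((1 : ℝ) / 6)) ^ 3 := pow_le_pow_left₀ hL0 hlog6 3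
      _ = 216 * ((P t) ^ ((1 : ℝ) / 6)) ^ (3 : ℕ) := by ring
      _ = 216 * (P t) ^ ((1 : ℝ) / 2) := by rw [hpow16]
  have hhalf : (P t) ^ ((1 : ℝ) / 2) * (P t) ^ ((1 : ℝ) / 2) = P t := by
    rw [← Real.rpow_add hPt0]; norm_num
  have hs0 : (0 : ℝ) < (P t) ^ ((1 : ℝ) / 2) := Real.rpow_pos_of_pos hPt0 _
  have hsqrt : (P t) ^ ((1 : ℝ) / 2) ≤ 216 * c₁ * (t ^ 8 * (P₂ t) ^ 3) := by
    have step : P t ≤ 216 * c₁ * (t ^ 8 * (P₂ t) ^ 3) * (P t) ^ ((1 : ℝ) / 2) := by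
      calc P t ≤ c₁ * (t ^ 8 * (P₂ t) ^ 3 * L ^ 3) := hmain
        _ ≤ c₁ * (t ^ 8 * (P₂ t) ^ 3 * (216 * (P t) ^ ((1 : ℝ) / 2))) := by
            apply mul_le_mul_of_nonneg_left _ hc₁pos.le
            exact mul_le_mul_of_nonneg_left hcube hXpos.le
        _ = 216 * c₁ * (t ^ 8 * (P₂ t) ^ 3) * (P t) ^ ((1 : ℝ) / 2) := by ring
    have h' : (P t) ^ ((1 : ℝ) / 2) * (P t) ^ ((1 : ℝ) / 2) ≤
        216 * c₁ * (t ^ 8 * (P₂ t) ^ 3) * (P t) ^ ((1 : ℝ) / 2) := by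
      rw [hhalf]; exact step
    exact le_of_mul_le_mul_right h' hs0
  have h216 : (0 : ℝ) < 216 * c₁ := by linarith
  have hlogP : L ≤ 2 * (Real.log (216 * c₁) + 8 * Real.log t + 3 * Real.log (P₂ t)) := by
    have h1 : Real.log ((P t) ^ ((1 : ℝ) / 2)) ≤
        Real.log (216 * c₁ * (t ^ 8 * (P₂ t) ^ 3)) := Real.log_le_log hs0 hsqrt
    have h2 : Real.log ((P t) ^ ((1 : ℝ) / 2)) = 1 / 2 * L := Real.log_rpow hPt0 _
    have h3 : Real.log (216 * c₁ * (t ^ 8 * (P₂ t) ^ 3)) =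
        Real.log (216 * c₁) + 8 * Real.log t + 3 * Real.log (P₂ t) := by
      rw [Real.log_mul h216.ne' hXpos.ne',
        Real.log_mul (pow_pos ht0 8).ne' (pow_pos hP₂t0 3).ne',
        Real.log_pow, Real.log_pow]
      push_cast; ring
    rw [h2, h3] at h1
    linarith
  have hlt : (1 / 2 : ℝ) ≤ Real.log t := by
    have := Real.log_le_log (by norm_num : (0:ℝ) < 2) ht
    linarith
  have hlp : (0 : ℝ) ≤ Real.log (P₂ t) := Real.log_nonneg hP₂t
  have hltp : Real.log (t * P₂ t) = Real.log t + Real.log (P₂ t) :=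
    Real.log_mul ht0.ne' hP₂t0.ne'
  have hLK : L ≤ K * Real.log (t * P₂ t) := by
    rw [hltp, hKdef]
    have e1 : 0 ≤ Real.log (216 * c₁) * (Real.log t - 1 / 2) :=
      mul_nonneg hlogc (by linarith)
    have e2 : 0 ≤ Real.log (216 * c₁) * Real.log (P₂ t) := mul_nonneg hlogc hlp
    linarith only [hlogP, e1, e2, hlp, hlt]
  have hLKpos : (0 : ℝ) < Real.log (t * P₂ t) := by rw [hltp]; linarith
  have hLK3 : L ^ 3 ≤ K ^ 3 * Real.log (t * P₂ t) ^ 3 := by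
    calc L ^ 3 ≤ (K * Real.log (t * P₂ t)) ^ 3 := pow_le_pow_left₀ hL0 hLK 3
      _ = K ^ 3 * Real.log (t * P₂ t) ^ 3 := by ring
  calc P t ≤ c₁ * (t ^ 8 * (P₂ t) ^ 3 * L ^ 3) := hmain
    _ ≤ c₁ * (t ^ 8 * (P₂ t) ^ 3 * (K ^ 3 * Real.log (t * P₂ t) ^ 3)) := by
        apply mul_le_mul_of_nonneg_left _ hc₁pos.le
        exact mul_le_mul_of_nonneg_left hLK3 hXpos.le
    _ = c₁ * K ^ 3 * t ^ 8 * (P₂ t) ^ 3 * Real.log (t * P₂ t) ^ 3 := by ring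
end
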